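/- Plotkin bound for the overweight distance: Let R be a finite local ring with maximal ideal J satisfying |J| ≥ 2, set η = 2(1 - 1/|J|), and let C ⊆ R^n be a (not necessarily linear) code of minimum overweight distance d. If d > n η, then |C| ≤ d / (d - n η). -/

import Mathlib

open Classical in
noncomputable def overweight {R : Type*} [Ring R] (x : R) : ℝ :=
  if x = 0 then 0 else if IsUnit x then 1 else 2

noncomputable def overweightN {R : Type*} [Ring R] {n : ℕ} (x : Fin n → R) : ℝ :=
  ∑ i, overweight (x i)

noncomputable def owDist {R : Type*} [Ring R] {n : ℕ} (x y : Fin n → R) : ℝ :=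
  overweightN (x - y)

/-!
Double counting of `∑_{x, y ∈ C} D(x, y)`. Each ordered pair of distinct codewords contributes
at least `d`, so the sum is at least `d |C| (|C| - 1)`. Coordinatewise, if `c u` codewords take
the value `u`, the contribution is `∑ c u c v W(u - v)`, and `W(a) = 1 + [a ∉ Rˣ] - 2 [a = 0]`
turns it into `M² + P - 2E` with `M = |C|`, `P = ∑_{u - v ∉ Rˣ} c u c v` and `E = ∑ c u²`.
Every `u` has exactly `|J|` partners `v` with `u - v ∉ Rˣ`, so AM-GM gives `P ≤ |J| E`;
together with `P ≤ M²` and `|J| ≥ 2` each coordinate contributes at most `η M²`.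
-/

open Finset Classical

section Fibers

variable {α β : Type*} [Fintype β] [DecidableEq β]

lemma sum_comp_eq_sum_card_fiber_mul (s : Finset α) (g : α → β) (f : β → ℝ) :
    ∑ x ∈ s, f (g x) = ∑ u, (#{x ∈ s | g x = u} : ℝ) * f u := by
  rw [← sum_fiberwise' s g f]
  simp only [sum_const, nsmul_eq_mul]

lemma sum_sum_comp_eq_sum_sum_card_fiber_mul (s : Finset α) (g : α → β)
    (F : β → β → ℝ) :
    ∑ x ∈ s, ∑ y ∈ s, F (g x) (g y)
      = ∑ u, ∑ v, (#{x ∈ s | g x = u} : ℝ) * #{x ∈ s | g x = v} * F u v := by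
  rw [sum_comp_eq_sum_card_fiber_mul s g fun u => ∑ y ∈ s, F u (g y)]
  refine sum_congr rfl fun u _ => ?_
  rw [sum_comp_eq_sum_card_fiber_mul s g (F u), mul_sum]
  simp only [mul_assoc]

lemma sum_card_fiber_eq_card (s : Finset α) (g : α → β) :
    ∑ u, (#{x ∈ s | g x = u} : ℝ) = #s := by
  exact_mod_cast (card_eq_sum_card_fiberwise fun x _ => mem_univ (g x)).symm

end Fibers

section Overweight

variable {R : Type*} [Ring R]

lemma overweight_eq [Nontrivial R] (a : R) :
    overweight a = 1 + (nonunits R).indicator (1 : R → ℝ) a - 2 * (if a = 0 then 1 else 0) := by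
  by_cases h0 : a = 0
  · simp [overweight, h0]; norm_num
  · by_cases hu : IsUnit a <;> simp [overweight, h0, hu]; norm_num

lemma nontrivial_of_nonunits_nonempty (h : (nonunits R).Nonempty) : Nontrivial R :=
  let ⟨x, hx⟩ := h
  ⟨⟨x, 1, fun hx1 => hx (hx1 ▸ isUnit_one)⟩⟩

variable [Fintype R]

lemma sum_sum_mul_overweight_sub [Nontrivial R] (c : R → ℝ) :
    ∑ u, ∑ v, c u * c v * overweight (u - v)
      = (∑ u, c u) ^ 2 + ∑ u, ∑ v, c u * c v * (nonunits R).indicator 1 (u - v)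
        - 2 * ∑ u, c u ^ 2 := by
  have hdiag :
      ∑ u, ∑ v, c u * c v * (2 * if u = v then 1 else 0 : ℝ) = 2 * ∑ u, c u ^ 2 := by
    simp only [mul_ite, mul_one, mul_zero, sum_ite_eq, mem_univ, if_true, mul_sum]
    exact sum_congr rfl fun u _ => by ring
  simp only [overweight_eq, sub_eq_zero, mul_sub, mul_add, mul_one, sum_sub_distrib,
    sum_add_distrib, hdiag, ← sum_mul_sum, sq]

lemma sum_indicator_nonunits :
    ∑ a : R, (nonunits R).indicator (1 : R → ℝ) a = (nonunits R).ncard := by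
  rw [sum_indicator_eq_sum_filter]
  simp [Set.ncard_eq_toFinset_card']

lemma sum_indicator_nonunits_sub_left (u : R) :
    ∑ v, (nonunits R).indicator (1 : R → ℝ) (u - v) = (nonunits R).ncard := by
  rw [← sum_indicator_nonunits]
  exact (Equiv.subLeft u).sum_comp ((nonunits R).indicator 1)

lemma sum_indicator_nonunits_sub_right (v : R) :
    ∑ u, (nonunits R).indicator (1 : R → ℝ) (u - v) = (nonunits R).ncard := by
  rw [← sum_indicator_nonunits]
  exact (Equiv.subRight v).sum_comp ((nonunits R).indicator 1)

lemma sum_sum_mul_indicator_nonunits_sub_le (c : R → ℝ) :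
    ∑ u, ∑ v, c u * c v * (nonunits R).indicator 1 (u - v)
      ≤ (nonunits R).ncard * ∑ u, c u ^ 2 := by
  have hleft : ∑ u, ∑ v, c u ^ 2 * (nonunits R).indicator (1 : R → ℝ) (u - v)
      = (nonunits R).ncard * ∑ u, c u ^ 2 := by
    simp_rw [← mul_sum, sum_indicator_nonunits_sub_left, mul_sum, mul_comm]
  have hright : ∑ u, ∑ v, c v ^ 2 * (nonunits R).indicator (1 : R → ℝ) (u - v)
      = (nonunits R).ncard * ∑ u, c u ^ 2 := by
    rw [sum_comm]
    simp_rw [← mul_sum, sum_indicator_nonunits_sub_right, mul_sum, mul_comm]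
  calc _ ≤ ∑ u, ∑ v, (c u ^ 2 * (nonunits R).indicator (1 : R → ℝ) (u - v)
          + c v ^ 2 * (nonunits R).indicator (1 : R → ℝ) (u - v)) / 2 := by
        gcongr with u _ v _
        have : 0 ≤ (nonunits R).indicator (1 : R → ℝ) (u - v) :=
          Set.indicator_nonneg (fun _ _ => zero_le_one) _
        linarith [mul_nonneg this (sq_nonneg (c u - c v))]
    _ = (nonunits R).ncard * ∑ u, c u ^ 2 := by
        simp only [← sum_div, sum_add_distrib, hleft, hright]
        ring

theorem sum_sum_mul_overweight_sub_le (hJ : 2 ≤ (nonunits R).ncard) (c : R → ℝ)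
    (hc : ∀ u, 0 ≤ c u) :
    ∑ u, ∑ v, c u * c v * overweight (u - v)
      ≤ 2 * (1 - 1 / (nonunits R).ncard) * (∑ u, c u) ^ 2 := by
  have : Nontrivial R :=
    nontrivial_of_nonunits_nonempty (Set.nonempty_of_ncard_ne_zero (by omega))
  have hq : (2 : ℝ) ≤ (nonunits R).ncard := by exact_mod_cast hJ
  set q : ℝ := ((nonunits R).ncard : ℝ)
  set M := ∑ u, c u
  set P := ∑ u, ∑ v, c u * c v * (nonunits R).indicator 1 (u - v)
  have hP_le_sq : P ≤ M ^ 2 := by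
    rw [sq, sum_mul_sum]
    refine sum_le_sum fun u _ => sum_le_sum fun v _ => ?_
    exact mul_le_of_le_one_right (mul_nonneg (hc u) (hc v))
      (Set.indicator_apply_le' (fun _ => le_rfl) (fun _ => zero_le_one))
  have hP_div_le : P / q ≤ ∑ u, c u ^ 2 := by
    rw [div_le_iff₀ (by positivity)]
    linarith [sum_sum_mul_indicator_nonunits_sub_le c]
  rw [sum_sum_mul_overweight_sub]
  calc _ ≤ M ^ 2 + (1 - 2 / q) * P := by
        have : 2 / q * P = 2 * (P / q) := by ring
        linarith
    _ ≤ M ^ 2 + (1 - 2 / q) * M ^ 2 := by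
        have : 2 / q ≤ 1 := by rw [div_le_one₀ (by positivity)]; exact hq
        gcongr
    _ = 2 * (1 - 1 / q) * M ^ 2 := by ring

theorem sum_sum_overweight_sub_le {α : Type*} (hJ : 2 ≤ (nonunits R).ncard) (s : Finset α)
    (g : α → R) :
    ∑ x ∈ s, ∑ y ∈ s, overweight (g x - g y)
      ≤ 2 * (1 - 1 / (nonunits R).ncard) * (#s : ℝ) ^ 2 := by
  rw [sum_sum_comp_eq_sum_sum_card_fiber_mul s g fun u v => overweight (u - v),
    ← sum_card_fiber_eq_card s g]
  exact sum_sum_mul_overweight_sub_le hJ _ fun _ => Nat.cast_nonneg _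

theorem sum_sum_owDist_le {n : ℕ} (hJ : 2 ≤ (nonunits R).ncard) (C : Finset (Fin n → R)) :
    ∑ x ∈ C, ∑ y ∈ C, owDist x y
      ≤ n * (2 * (1 - 1 / (nonunits R).ncard)) * (#C : ℝ) ^ 2 := by
  calc ∑ x ∈ C, ∑ y ∈ C, owDist x y
        = ∑ i, ∑ x ∈ C, ∑ y ∈ C, overweight (x i - y i) := by
        simp only [owDist, overweightN, Pi.sub_apply]
        exact (sum_congr rfl fun _ _ => sum_comm).trans sum_comm
    _ ≤ ∑ _i : Fin n, 2 * (1 - 1 / (nonunits R).ncard) * (#C : ℝ) ^ 2 :=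
        sum_le_sum fun i _ => sum_sum_overweight_sub_le hJ C (· i)
    _ = n * (2 * (1 - 1 / (nonunits R).ncard)) * (#C : ℝ) ^ 2 := by
        simp [mul_assoc]

end Overweight

lemma owDist_self {R : Type*} [Ring R] {n : ℕ} (x : Fin n → R) : owDist x x = 0 := by
  simp [owDist, overweightN, overweight]

lemma mul_card_mul_card_sub_one_le_sum_sum {α : Type*} (C : Finset α) (D : α → α → ℝ)
    (d : ℝ) (hD : ∀ x, D x x = 0) (hmin : ∀ x ∈ C, ∀ y ∈ C, x ≠ y → d ≤ D x y) :
    d * (#C * (#C - 1)) ≤ ∑ x ∈ C, ∑ y ∈ C, D x y := by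
  have hrow : ∀ x ∈ C, d * (#C - 1) ≤ ∑ y ∈ C, D x y := by
    intro x hx
    rw [← sum_erase_add C _ hx, hD, add_zero]
    calc d * (#C - 1) = ∑ _y ∈ C.erase x, d := by
          rw [sum_const, card_erase_of_mem hx, nsmul_eq_mul,
            Nat.cast_pred (card_pos.mpr ⟨x, hx⟩), mul_comm]
      _ ≤ ∑ y ∈ C.erase x, D x y :=
          sum_le_sum fun y hy =>
            hmin x hx y (mem_of_mem_erase hy) (ne_of_mem_erase hy).symm
  calc d * (#C * (#C - 1)) = ∑ _x ∈ C, d * (#C - 1) := by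
        rw [sum_const, nsmul_eq_mul]; ring
    _ ≤ ∑ x ∈ C, ∑ y ∈ C, D x y := sum_le_sum hrow

lemma le_div_sub_of_mul_mul_sub_one_le {M d a : ℝ} (hM : 0 ≤ M) (ha : 0 ≤ a) (had : a < d)
    (h : d * (M * (M - 1)) ≤ a * M ^ 2) : M ≤ d / (d - a) := by
  rw [le_div_iff₀ (sub_pos.mpr had)]
  rcases hM.eq_or_lt with rfl | hM
  · linarith
  · have : M * (M * (d - a)) ≤ M * d := by nlinarith
    exact le_of_mul_le_mul_left this hM

theorem plotkin_overweight_general {R : Type*} [Ring R] [Fintype R]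
    {n : ℕ} (hJ : 2 ≤ (nonunits R).ncard) (η : ℝ)
    (hη : η = 2 * (1 - 1 / ((nonunits R).ncard : ℝ)))
    (C : Finset (Fin n → R)) (d : ℝ)
    (hmin : ∀ x ∈ C, ∀ y ∈ C, x ≠ y → d ≤ owDist x y)
    (hd : d > n * η) :
    (C.card : ℝ) ≤ d / (d - n * η) := by
  have hη_nonneg : 0 ≤ η := by
    have : 1 / ((nonunits R).ncard : ℝ) ≤ 1 := by
      rw [div_le_one₀ (by positivity)]
      exact_mod_cast (by omega : 1 ≤ (nonunits R).ncard)
    rw [hη]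
    linarith
  refine le_div_sub_of_mul_mul_sub_one_le (Nat.cast_nonneg _)
    (mul_nonneg n.cast_nonneg hη_nonneg) hd ?_
  calc d * (#C * (#C - 1)) ≤ ∑ x ∈ C, ∑ y ∈ C, owDist x y :=
        mul_card_mul_card_sub_one_le_sum_sum C owDist d owDist_self hmin
    _ ≤ n * η * #C ^ 2 := hη ▸ sum_sum_owDist_le hJ C

/-- Plotkin bound for the overweight distance: let `R` be a finite local ring
whose maximal ideal `J = nonunits R` has at least two elements, and set
`η = 2(1 - 1/|J|)`. If a code `C ⊆ R^n` has minimum overweight distance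
`d > n η`, then `|C| ≤ d / (d - n η)`. -/
theorem plotkin_overweight {R : Type*} [Ring R] [Fintype R]
    [IsLocalRing R] {n : ℕ} (hJ : 2 ≤ (nonunits R).ncard) (η : ℝ)
    (hη : η = 2 * (1 - 1 / ((nonunits R).ncard : ℝ)))
    (C : Finset (Fin n → R)) (d : ℝ)
    (hmin : ∀ x ∈ C, ∀ y ∈ C, x ≠ y → d ≤ owDist x y)
    (hex : ∃ x ∈ C, ∃ y ∈ C, x ≠ y ∧ owDist x y = d)
    (hd : d > n * η) :
    (C.card : ℝ) ≤ d / (d - n * η) :=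
  plotkin_overweight_general hJ η hη C d hmin hd
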